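/- Let f be a bijection of the unit square obtained from a partition into basic dyadic rectangles R_1,...,R_N mapped affinely (by maps of the form (x,y) ↦ (2^a x + c, 2^b y + d)) onto another such partition. Then there is a grid refinement: the map f can also be represented using a source partition of the grid form {I_i × J_j} with at most N² rectangles, where I_1,...,I_m and J_1,...,J_n are dyadic partitions of [0,1] with m, n ≤ N, such that f is affine of the stated form on each I_i × J_j and maps it onto a basic dyadic rectangle. -/

import Mathlib

/-- The basic dyadic interval `[(i-1)/2^k, i/2^k]`. -/
def dIcc (k i : ℕ) : Set ℝ := Set.Icc ((i - 1 : ℝ) / 2 ^ k) ((i : ℝ) / 2 ^ k)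

/-- A basic dyadic interval. -/
def IsDyadicInterval (I : Set ℝ) : Prop :=
  ∃ k i : ℕ, 1 ≤ i ∧ i ≤ 2 ^ k ∧ I = dIcc k i

/-- A basic dyadic rectangle: a product of two basic dyadic intervals. -/
def IsDyadicRect (R : Set (ℝ × ℝ)) : Prop :=
  ∃ I J : Set ℝ, IsDyadicInterval I ∧ IsDyadicInterval J ∧ R = I ×ˢ J

/-- A partition of `[0,1]` into basic dyadic intervals. -/
def DyadicPartition (P : Finset (Set ℝ)) : Prop :=
  (∀ I ∈ P, IsDyadicInterval I) ∧
  (∀ I ∈ P, ∀ J ∈ P, I ≠ J → interior I ∩ interior J = ∅) ∧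
  ⋃₀ (P : Set (Set ℝ)) = Set.Icc (0 : ℝ) 1

/-- `f` is affine on `R` in each coordinate with dyadic scalings and translations,
i.e. of the form `(x, y) ↦ (2^a x + c, 2^b y + d)` on `R`. -/
def DyadicAffineOn (f : ℝ × ℝ → ℝ × ℝ) (R : Set (ℝ × ℝ)) : Prop :=
  ∃ a b : ℤ, ∃ c d : ℝ, ∀ p ∈ R, f p = ((2 : ℝ) ^ a * p.1 + c, (2 : ℝ) ^ b * p.2 + d)


open Set

lemma dIcc_lt' (k i : ℕ) : ((i:ℝ)-1)/2^k < (i:ℝ)/2^k := by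
  have : (0:ℝ) < 2^k := by positivity
  rw [div_lt_div_iff₀ this this]; nlinarith

lemma dIcc_nonempty (k i : ℕ) : (dIcc k i).Nonempty :=
  Set.nonempty_Icc.mpr (dIcc_lt' k i).le

lemma dIcc_subset_unit {k i : ℕ} (h1 : 1 ≤ i) (h2 : i ≤ 2^k) : dIcc k i ⊆ Icc 0 1 := by
  unfold dIcc
  apply Icc_subset_Icc
  · have : (1:ℝ) ≤ i := by exact_mod_cast h1
    apply div_nonneg (by linarith) (by positivity)
  · rw [div_le_one (by positivity)]
    exact_mod_cast h2

lemma interval_subset_unit {I : Set ℝ} (h : IsDyadicInterval I) : I ⊆ Icc 0 1 := by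
  obtain ⟨k, i, h1, h2, rfl⟩ := h; exact dIcc_subset_unit h1 h2

lemma isClosed_of_dyadic {I : Set ℝ} (h : IsDyadicInterval I) : IsClosed I := by
  obtain ⟨k, i, _, _, rfl⟩ := h; exact isClosed_Icc

lemma irrational_mem_Ioo {x : ℝ} {k i : ℕ} (hx : Irrational x) (h : x ∈ dIcc k i) :
    x ∈ Ioo (((i:ℝ)-1)/2^k) ((i:ℝ)/2^k) := by
  have e1 : ((((i:ℚ))-1)/2^k : ℚ) = (((i:ℝ)-1)/2^k : ℝ) := by push_cast; ring
  have e2 : (((i:ℚ))/2^k : ℚ) = (((i:ℝ))/2^k : ℝ) := by push_cast; ring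
  exact ⟨h.1.lt_of_ne (e1 ▸ (hx.ne_rat _).symm), h.2.lt_of_ne (e2 ▸ hx.ne_rat _)⟩

/-- If `l ≤ k` and the two intervals overlap strictly, the finer is inside the coarser. -/
lemma dIcc_subset_of_overlap {k i l j : ℕ} (hl : l ≤ k)
    (h1 : ((j:ℝ)-1)/2^l < (i:ℝ)/2^k) (h2 : ((i:ℝ)-1)/2^k < (j:ℝ)/2^l) :
    dIcc k i ⊆ dIcc l j := by
  obtain ⟨e, rfl⟩ : ∃ e, k = l + e := ⟨k - l, by omega⟩
  have hl0 : (0:ℝ) < 2^l := by positivity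
  have hk0 : (0:ℝ) < 2^(l+e) := by positivity
  have hpow : (2:ℝ)^(l+e) = 2^l * 2^e := by rw [pow_add]
  rw [div_lt_div_iff₀ hl0 hk0] at h1
  rw [div_lt_div_iff₀ hk0 hl0] at h2
  -- h1 : (j-1) * 2^(l+e) < i * 2^l ; h2 : (i-1) * 2^l < j * 2^(l+e)
  have hz1 : ((j:ℤ)-1) * 2^e < i := by
    have : ((j:ℝ)-1) * 2^e < i := by nlinarith
    exact_mod_cast this
  have hz2 : ((i:ℤ)-1) < j * 2^e := by
    have : ((i:ℝ)-1) < j * 2^e := by nlinarith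
    exact_mod_cast this
  have hz1' : ((j:ℤ)-1) * 2^e ≤ (i:ℤ) - 1 := Int.le_sub_one_iff.mpr hz1
  have hz2' : (i:ℤ) ≤ (j:ℤ) * 2^e := by omega
  have hr1 : ((j:ℝ)-1) * 2^e ≤ (i:ℝ) - 1 := by exact_mod_cast hz1'
  have hr2 : (i:ℝ) ≤ (j:ℝ) * 2^e := by exact_mod_cast hz2'
  apply Icc_subset_Icc
  · rw [div_le_div_iff₀ hl0 hk0]; nlinarith
  · rw [div_le_div_iff₀ hk0 hl0]; nlinarith

lemma dyadic_comparable {I J : Set ℝ} (hI : IsDyadicInterval I) (hJ : IsDyadicInterval J)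
    {x : ℝ} (hx : Irrational x) (hxI : x ∈ I) (hxJ : x ∈ J) : I ⊆ J ∨ J ⊆ I := by
  obtain ⟨k, i, -, -, rfl⟩ := hI
  obtain ⟨l, j, -, -, rfl⟩ := hJ
  have h1 := irrational_mem_Ioo hx hxI
  have h2 := irrational_mem_Ioo hx hxJ
  rcases le_total l k with h | h
  · exact Or.inl (dIcc_subset_of_overlap h (h2.1.trans h1.2) (h1.1.trans h2.2))
  · exact Or.inr (dIcc_subset_of_overlap h (h1.1.trans h2.2) (h2.1.trans h1.2))


lemma image_affine_Icc (s c u v : ℝ) (hs : 0 < s) (huv : u ≤ v) :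
    (fun x => s * x + c) '' Icc u v = Icc (s*u+c) (s*v+c) := by
  ext y
  simp only [mem_image, mem_Icc]
  constructor
  · rintro ⟨x, ⟨h1, h2⟩, rfl⟩
    constructor <;> nlinarith
  · rintro ⟨h1, h2⟩
    refine ⟨(y - c)/s, ⟨?_, ?_⟩, by field_simp; ring⟩
    · rw [le_div_iff₀ hs]; linarith
    · rw [div_le_iff₀ hs]; linarith

lemma Icc_eq_Icc {a b c d : ℝ} (h : a ≤ b) (he : Icc a b = Icc c d) : a = c ∧ b = d := by
  have hcd : c ≤ d := nonempty_Icc.mp (he ▸ nonempty_Icc.mpr h)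
  have h1 := (Icc_subset_Icc_iff h).mp he.subset
  have h2 := (Icc_subset_Icc_iff hcd).mp he.superset
  exact ⟨le_antisymm h2.1 h1.1, le_antisymm h1.2 h2.2⟩

/-- Auxiliary computation. -/
lemma affine_endpoint (A B E t u v : ℝ) (hA : A ≠ 0) (hB : B ≠ 0) (hE : E ≠ 0) :
    (A/B) * (t/(A*E)) + (u/B - (A/B)*(v/A)) = (t + (u - v)*E)/(B*E) := by
  field_simp

/-- Key lemma: an affine map of the form `x ↦ 2^a x + c` that maps a dyadic
interval onto a dyadic interval maps every dyadic subinterval to a dyadic interval. -/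
lemma image_dyadic_sub (a : ℤ) (c : ℝ) {k i l j l' j' : ℕ}
    (hj'1 : 1 ≤ j') (hj'2 : j' ≤ 2 ^ l')
    (hsub : dIcc k i ⊆ dIcc l j)
    (himg : (fun x => (2:ℝ)^a * x + c) '' dIcc l j = dIcc l' j') :
    IsDyadicInterval ((fun x => (2:ℝ)^a * x + c) '' dIcc k i) := by
  set s : ℝ := (2:ℝ)^a with hs_def
  have hs : 0 < s := by positivity
  rw [dIcc, image_affine_Icc s c _ _ hs (dIcc_lt' l j).le] at himg
  obtain ⟨eq1, eq2⟩ := Icc_eq_Icc (by nlinarith [dIcc_lt' l j]) himg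
  obtain ⟨hA, hB⟩ := (Icc_subset_Icc_iff (dIcc_lt' k i).le).mp hsub
  have hlk : l ≤ k := by
    have h2 : (2:ℝ)^l ≤ 2^k := by
      have hk0 : (0:ℝ) < 2^k := by positivity
      have hl0 : (0:ℝ) < 2^l := by positivity
      rw [div_le_div_iff₀ hl0 hk0] at hA
      rw [div_le_div_iff₀ hk0 hl0] at hB
      nlinarith
    exact (pow_le_pow_iff_right₀ one_lt_two).mp h2
  obtain ⟨e, rfl⟩ : ∃ e, k = l + e := ⟨k - l, by omega⟩
  have hl0 : (0:ℝ) < 2^l := by positivity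
  have hl'0 : (0:ℝ) < 2^l' := by positivity
  have he0 : (0:ℝ) < 2^e := by positivity
  have hk0 : (0:ℝ) < 2^(l+e) := by positivity
  have hpow : (2:ℝ)^(l+e) = 2^l * 2^e := pow_add 2 l e
  have hs_eq : s = 2^l / 2^l' := by
    have h := sub_eq_sub_iff_sub_eq_sub.mp (congrArg₂ (· - ·) eq2 eq1)
    field_simp at h ⊢
    nlinarith [h]
  have hz1 : ((j:ℤ)-1) * 2^e ≤ (i:ℤ) - 1 := by
    have : ((j:ℝ)-1) * 2^e ≤ (i:ℝ) - 1 := by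
      rw [div_le_div_iff₀ hl0 hk0] at hA; nlinarith
    exact_mod_cast this
  have hz2 : (i:ℤ) ≤ (j:ℤ) * 2^e := by
    have : (i:ℝ) ≤ (j:ℝ) * 2^e := by
      rw [div_le_div_iff₀ hk0 hl0] at hB; nlinarith
    exact_mod_cast this
  set K : ℕ := l' + e with hK
  set i' : ℤ := (i:ℤ) + ((j':ℤ) - j) * 2^e with hi'
  have he0z : (0:ℤ) < 2^e := by positivity
  have hj'z : (1:ℤ) ≤ (j':ℤ) := by exact_mod_cast hj'1
  have hi'1 : 1 ≤ i' := by nlinarith [mul_nonneg (sub_nonneg.mpr hj'z) he0z.le]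
  have hi'2 : i' ≤ 2^K := by
    have hj'2z : (j':ℤ) ≤ 2^l' := by exact_mod_cast hj'2
    have : (2:ℤ)^K = 2^l' * 2^e := pow_add 2 l' e
    nlinarith [mul_le_mul_of_nonneg_right hj'2z he0z.le]
  have hi'0 : (0:ℤ) ≤ i' := by linarith
  have hcast : (i'.toNat : ℝ) = ((i':ℤ) : ℝ) := by exact_mod_cast Int.toNat_of_nonneg hi'0
  have hi'r : ((i':ℤ) : ℝ) = (i:ℝ) + ((j':ℝ) - j) * 2^e := by push_cast [hi']; ring
  have hKpow : (2:ℝ)^K = 2^l' * 2^e := pow_add 2 l' e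
  have hc : c = ((j':ℝ)-1)/2^l' - s * (((j:ℝ)-1)/2^l) := by linarith [eq1]
  refine ⟨K, i'.toNat, (Int.le_toNat hi'0).mpr hi'1, Int.toNat_le.mpr (by exact_mod_cast hi'2), ?_⟩
  have hlow : s * (((i:ℝ)-1)/2^(l+e)) + c = ((i'.toNat:ℝ)-1)/2^K := by
    rw [hc, hs_eq, hpow,
      affine_endpoint (2^l) (2^l') (2^e) ((i:ℝ)-1) ((j':ℝ)-1) ((j:ℝ)-1)
        (ne_of_gt hl0) (ne_of_gt hl'0) (ne_of_gt he0),
      hcast, hi'r, hKpow]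
    ring
  have hup : s * ((i:ℝ)/2^(l+e)) + c = (i'.toNat:ℝ)/2^K := by
    rw [hc, hs_eq, hpow,
      affine_endpoint (2^l) (2^l') (2^e) ((i:ℝ)) ((j':ℝ)-1) ((j:ℝ)-1)
        (ne_of_gt hl0) (ne_of_gt hl'0) (ne_of_gt he0),
      hcast, hi'r, hKpow]
    ring
  rw [dIcc, image_affine_Icc s c _ _ hs (dIcc_lt' (l+e) i).le, dIcc, hlow, hup]


lemma interior_dIcc (k i : ℕ) : interior (dIcc k i) = Ioo (((i:ℝ)-1)/2^k) ((i:ℝ)/2^k) := by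
  rw [dIcc, interior_Icc]

/-- From a family of candidate dyadic intervals covering the irrationals of `[0,1]`,
such that local minimality implies global minimality, extract a dyadic partition of
minimal candidates. -/
lemma mk_partition (C : Finset (Set ℝ))
    (hdy : ∀ I ∈ C, IsDyadicInterval I)
    (hcov : ∀ x : ℝ, x ∈ Icc (0:ℝ) 1 → Irrational x → ∃ I ∈ C, x ∈ I)
    (hmin : ∀ x : ℝ, Irrational x → x ∈ Icc (0:ℝ) 1 → ∀ I ∈ C, x ∈ I →
      (∀ I' ∈ C, x ∈ I' → ¬ I' ⊂ I) → ∀ J ∈ C, ¬ J ⊂ I) :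
    ∃ P : Finset (Set ℝ), DyadicPartition P ∧ P.card ≤ C.card ∧
      ∀ I ∈ P, I ∈ C ∧ ∀ J ∈ C, ¬ J ⊂ I := by
  classical
  refine ⟨C.filter (fun I => ∀ J ∈ C, ¬ J ⊂ I), ⟨?_, ?_, ?_⟩, Finset.card_filter_le _ _, ?_⟩
  · intro I hI; exact hdy I (Finset.mem_filter.mp hI).1
  · -- disjoint interiors
    intro I hI J hJ hne
    obtain ⟨hIC, hImin⟩ := Finset.mem_filter.mp hI
    obtain ⟨hJC, hJmin⟩ := Finset.mem_filter.mp hJ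
    by_contra h
    obtain ⟨x, hxI, hxJ⟩ := Set.nonempty_iff_ne_empty.mpr h
    obtain ⟨k, i, -, -, hIeq⟩ := hdy I hIC
    obtain ⟨l, j, -, -, hJeq⟩ := hdy J hJC
    subst hIeq; subst hJeq
    rw [interior_dIcc] at hxI hxJ
    have hcomp : dIcc k i ⊆ dIcc l j ∨ dIcc l j ⊆ dIcc k i := by
      rcases le_total l k with h' | h'
      · exact Or.inl (dIcc_subset_of_overlap h' (hxJ.1.trans hxI.2) (hxI.1.trans hxJ.2))
      · exact Or.inr (dIcc_subset_of_overlap h' (hxI.1.trans hxJ.2) (hxJ.1.trans hxI.2))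
    rcases hcomp with h' | h'
    · exact hJmin _ hIC (ssubset_of_subset_of_ne h' hne)
    · exact hImin _ hJC (ssubset_of_subset_of_ne h' (Ne.symm hne))
  · -- covers [0,1]
    apply Set.Subset.antisymm
    · intro x hx
      obtain ⟨I, hI, hxI⟩ := hx
      exact interval_subset_unit (hdy I (Finset.mem_filter.mp (by exact_mod_cast hI)).1) hxI
    · -- the union is closed and contains all irrationals of [0,1]
      set U : Set ℝ := ⋃₀ ((C.filter (fun I => ∀ J ∈ C, ¬ J ⊂ I) : Finset (Set ℝ)) : Set (Set ℝ)) with hU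
      have hUclosed : IsClosed U := by
        rw [hU, Set.sUnion_eq_biUnion]
        exact Set.Finite.isClosed_biUnion (Finset.finite_toSet _)
          (fun I hI => isClosed_of_dyadic (hdy I (Finset.mem_filter.mp (by exact_mod_cast hI)).1))
      have hirr : ∀ x : ℝ, x ∈ Icc (0:ℝ) 1 → Irrational x → x ∈ U := by
        intro x hx hirrx
        set S := C.filter (fun I => x ∈ I) with hS
        have hSne : S.Nonempty := by
          obtain ⟨I, hI, hxI⟩ := hcov x hx hirrx
          exact ⟨I, Finset.mem_filter.mpr ⟨hI, hxI⟩⟩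
        obtain ⟨m, hmS, hmmin⟩ := Finset.exists_minimal hSne
        obtain ⟨hmC, hxm⟩ := Finset.mem_filter.mp hmS
        have hloc : ∀ I' ∈ C, x ∈ I' → ¬ I' ⊂ m := fun I' hI' hxI' =>
          fun h => h.2 (hmmin (Finset.mem_filter.mpr ⟨hI', hxI'⟩) h.1)
        have hglob := hmin x hirrx hx m hmC hxm hloc
        exact ⟨m, by exact_mod_cast Finset.mem_filter.mpr ⟨hmC, hglob⟩, hxm⟩
      have h1 : Ioo (0:ℝ) 1 ⊆ closure (Ioo (0:ℝ) 1 ∩ {x | Irrational x}) :=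
        Dense.open_subset_closure_inter dense_irrational isOpen_Ioo
      have h2 : Ioo (0:ℝ) 1 ∩ {x | Irrational x} ⊆ U := fun x hx =>
        hirr x (Ioo_subset_Icc_self hx.1) hx.2
      have h3 : Icc (0:ℝ) 1 ⊆ closure U := by
        rw [← closure_Ioo (zero_ne_one (α := ℝ))]
        exact closure_mono (h1.trans (closure_mono h2)) |>.trans (by rw [closure_closure])
      rw [← hUclosed.closure_eq]
      exact h3
  · intro I hI
    exact ⟨(Finset.mem_filter.mp hI).1, (Finset.mem_filter.mp hI).2⟩

lemma dyadic_nonempty {I : Set ℝ} (h : IsDyadicInterval I) : I.Nonempty := by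
  obtain ⟨k, i, -, -, rfl⟩ := h; exact dIcc_nonempty k i

lemma subset_of_not_ssubset {I I' : Set ℝ} (hI : IsDyadicInterval I) (hI' : IsDyadicInterval I')
    {x : ℝ} (hx : Irrational x) (h1 : x ∈ I) (h2 : x ∈ I') (hns : ¬ I' ⊂ I) : I ⊆ I' := by
  rcases dyadic_comparable hI hI' hx h1 h2 with h | h
  · exact h
  · rcases eq_or_ne I' I with rfl | hne
    · exact Set.Subset.rfl
    · exact absurd (ssubset_of_subset_of_ne h hne) hns



theorem stmt10 (f : ℝ × ℝ → ℝ × ℝ) (N : ℕ) (Part : Finset (Set (ℝ × ℝ)))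
    (hcard : Part.card = N)
    (hrect : ∀ R ∈ Part, IsDyadicRect R)
    (hdisj : ∀ R ∈ Part, ∀ R' ∈ Part, R ≠ R' → interior R ∩ interior R' = ∅)
    (hcover : ⋃₀ (Part : Set (Set (ℝ × ℝ))) = Set.Icc (0 : ℝ) 1 ×ˢ Set.Icc (0 : ℝ) 1)
    (haff : ∀ R ∈ Part, DyadicAffineOn f R ∧ IsDyadicRect (f '' R)) :
    ∃ P Q : Finset (Set ℝ), DyadicPartition P ∧ DyadicPartition Q ∧
      P.card ≤ N ∧ Q.card ≤ N ∧ P.card * Q.card ≤ N ^ 2 ∧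
      ∀ I ∈ P, ∀ J ∈ Q, DyadicAffineOn f (I ×ˢ J) ∧ IsDyadicRect (f '' (I ×ˢ J)) := by
  classical
  set g1 : Set (ℝ×ℝ) → Set ℝ := fun R => Prod.fst '' R with hg1
  set g2 : Set (ℝ×ℝ) → Set ℝ := fun R => Prod.snd '' R with hg2
  have hproj : ∀ R ∈ Part, IsDyadicInterval (g1 R) ∧ IsDyadicInterval (g2 R) ∧
      R = g1 R ×ˢ g2 R := by
    intro R hR
    obtain ⟨I, J, hI, hJ, rfl⟩ := hrect R hR
    have e1 : g1 (I ×ˢ J) = I := Set.fst_image_prod I (dyadic_nonempty hJ)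
    have e2 : g2 (I ×ˢ J) = J := Set.snd_image_prod (dyadic_nonempty hI) J
    rw [e1, e2]; exact ⟨hI, hJ, rfl⟩
  set CP := Part.image g1 with hCP
  set CQ := Part.image g2 with hCQ
  have hsq : ∀ p : ℝ×ℝ, p.1 ∈ Icc (0:ℝ) 1 → p.2 ∈ Icc (0:ℝ) 1 → ∃ R ∈ Part, p ∈ R := by
    intro p h1 h2
    have hp : p ∈ ⋃₀ (Part : Set (Set (ℝ×ℝ))) := by
      rw [hcover]; exact Set.mem_prod.mpr ⟨h1, h2⟩
    obtain ⟨R, hR, hpR⟩ := hp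
    exact ⟨R, by exact_mod_cast hR, hpR⟩
  have hdyP : ∀ I ∈ CP, IsDyadicInterval I := by
    intro I hI; obtain ⟨R, hR, rfl⟩ := Finset.mem_image.mp hI; exact (hproj R hR).1
  have hdyQ : ∀ J ∈ CQ, IsDyadicInterval J := by
    intro J hJ; obtain ⟨R, hR, rfl⟩ := Finset.mem_image.mp hJ; exact (hproj R hR).2.1
  have hcovP : ∀ x : ℝ, x ∈ Icc (0:ℝ) 1 → Irrational x → ∃ I ∈ CP, x ∈ I := by
    intro x hx _
    obtain ⟨R, hR, hpR⟩ := hsq (x, x) hx hx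
    exact ⟨g1 R, Finset.mem_image_of_mem _ hR, ⟨(x,x), hpR, rfl⟩⟩
  have hcovQ : ∀ y : ℝ, y ∈ Icc (0:ℝ) 1 → Irrational y → ∃ J ∈ CQ, y ∈ J := by
    intro y hy _
    obtain ⟨R, hR, hpR⟩ := hsq (y, y) hy hy
    exact ⟨g2 R, Finset.mem_image_of_mem _ hR, ⟨(y,y), hpR, rfl⟩⟩
  -- minimality transfer for the first coordinate
  have hminP : ∀ x : ℝ, Irrational x → x ∈ Icc (0:ℝ) 1 → ∀ I ∈ CP, x ∈ I →
      (∀ I' ∈ CP, x ∈ I' → ¬ I' ⊂ I) → ∀ J ∈ CP, ¬ J ⊂ I := by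
    intro x hxirr hx01 I hICP hxI hloc J hJCP hJI
    obtain ⟨R', hR', rfl⟩ := Finset.mem_image.mp hJCP
    obtain ⟨hJ'dy, hK'dy, hR'eq⟩ := hproj R' hR'
    obtain ⟨bK, mK, hm1, hm2, hK'⟩ := hK'dy
    obtain ⟨y, hyirr, hy1, hy2⟩ := exists_irrational_btwn (dIcc_lt' bK mK)
    have hyK' : y ∈ g2 R' := by rw [hK']; exact ⟨hy1.le, hy2.le⟩
    have hy01 : y ∈ Icc (0:ℝ) 1 := dIcc_subset_unit hm1 hm2 (hK' ▸ hyK')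
    obtain ⟨R'', hR'', hpR''⟩ := hsq (x, y) hx01 hy01
    obtain ⟨hI''dy, hK''dy, hR''eq⟩ := hproj R'' hR''
    have hxI'' : x ∈ g1 R'' := ⟨(x,y), hpR'', rfl⟩
    have hyK'' : y ∈ g2 R'' := ⟨(x,y), hpR'', rfl⟩
    have hIdy := hdyP I hICP
    have hII'' : I ⊆ g1 R'' :=
      subset_of_not_ssubset hIdy hI''dy hxirr hxI hxI''
        (hloc _ (Finset.mem_image_of_mem _ hR'') hxI'')
    have hRne : R' ≠ R'' := by
      rintro rfl
      exact (lt_iff_le_not_ge.mp hJI).2 hII''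
    obtain ⟨kJ, iJ, -, -, hJeq⟩ := hJ'dy
    obtain ⟨z, hzirr, hz1, hz2⟩ := exists_irrational_btwn (dIcc_lt' kJ iJ)
    have hzJ : z ∈ interior (g1 R') := by rw [hJeq, interior_dIcc]; exact ⟨hz1, hz2⟩
    have hzI'' : z ∈ interior (g1 R'') :=
      interior_mono ((lt_iff_le_not_ge.mp hJI).1.trans hII'') hzJ
    have hyintK' : y ∈ interior (g2 R') := by rw [hK', interior_dIcc]; exact ⟨hy1, hy2⟩
    have hyintK'' : y ∈ interior (g2 R'') := by
      obtain ⟨b'', m'', -, -, hK''⟩ := hK''dy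
      rw [hK'', interior_dIcc]
      exact irrational_mem_Ioo hyirr (hK'' ▸ hyK'')
    have hintR' := congrArg interior hR'eq
    rw [interior_prod_eq] at hintR'
    have hintR'' := congrArg interior hR''eq
    rw [interior_prod_eq] at hintR''
    have hmem : ((z,y) : ℝ×ℝ) ∈ interior R' ∩ interior R'' := by
      constructor
      · rw [hintR']; exact ⟨hzJ, hyintK'⟩
      · rw [hintR'']; exact ⟨hzI'', hyintK''⟩
    rw [hdisj R' hR' R'' hR'' hRne] at hmem
    exact hmem
  -- minimality transfer for the second coordinate
  have hminQ : ∀ y : ℝ, Irrational y → y ∈ Icc (0:ℝ) 1 → ∀ J ∈ CQ, y ∈ J →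
      (∀ J' ∈ CQ, y ∈ J' → ¬ J' ⊂ J) → ∀ J2 ∈ CQ, ¬ J2 ⊂ J := by
    intro y hyirr hy01 J hJCQ hyJ hloc J2 hJ2CQ hJ2J
    obtain ⟨R', hR', rfl⟩ := Finset.mem_image.mp hJ2CQ
    obtain ⟨hK'dy, hJ'dy, hR'eq⟩ := hproj R' hR'
    obtain ⟨bK, mK, hm1, hm2, hK'⟩ := hK'dy
    obtain ⟨x, hxirr, hx1, hx2⟩ := exists_irrational_btwn (dIcc_lt' bK mK)
    have hxK' : x ∈ g1 R' := by rw [hK']; exact ⟨hx1.le, hx2.le⟩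
    have hx01 : x ∈ Icc (0:ℝ) 1 := dIcc_subset_unit hm1 hm2 (hK' ▸ hxK')
    obtain ⟨R'', hR'', hpR''⟩ := hsq (x, y) hx01 hy01
    obtain ⟨hK''dy, hJ''dy, hR''eq⟩ := hproj R'' hR''
    have hyJ'' : y ∈ g2 R'' := ⟨(x,y), hpR'', rfl⟩
    have hxK'' : x ∈ g1 R'' := ⟨(x,y), hpR'', rfl⟩
    have hJdy := hdyQ J hJCQ
    have hJJ'' : J ⊆ g2 R'' :=
      subset_of_not_ssubset hJdy hJ''dy hyirr hyJ hyJ''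
        (hloc _ (Finset.mem_image_of_mem _ hR'') hyJ'')
    have hRne : R' ≠ R'' := by
      rintro rfl
      exact (lt_iff_le_not_ge.mp hJ2J).2 hJJ''
    obtain ⟨kJ, iJ, -, -, hJeq⟩ := hJ'dy
    obtain ⟨z, hzirr, hz1, hz2⟩ := exists_irrational_btwn (dIcc_lt' kJ iJ)
    have hzJ : z ∈ interior (g2 R') := by rw [hJeq, interior_dIcc]; exact ⟨hz1, hz2⟩
    have hzJ'' : z ∈ interior (g2 R'') :=
      interior_mono ((lt_iff_le_not_ge.mp hJ2J).1.trans hJJ'') hzJ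
    have hxintK' : x ∈ interior (g1 R') := by rw [hK', interior_dIcc]; exact ⟨hx1, hx2⟩
    have hxintK'' : x ∈ interior (g1 R'') := by
      obtain ⟨b'', m'', -, -, hK''⟩ := hK''dy
      rw [hK'', interior_dIcc]
      exact irrational_mem_Ioo hxirr (hK'' ▸ hxK'')
    have hintR' := congrArg interior hR'eq
    rw [interior_prod_eq] at hintR'
    have hintR'' := congrArg interior hR''eq
    rw [interior_prod_eq] at hintR''
    have hmem : ((x,z) : ℝ×ℝ) ∈ interior R' ∩ interior R'' := by
      constructor
      · rw [hintR']; exact ⟨hxintK', hzJ⟩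
      · rw [hintR'']; exact ⟨hxintK'', hzJ''⟩
    rw [hdisj R' hR' R'' hR'' hRne] at hmem
    exact hmem
  obtain ⟨P, hPpart, hPcard, hPprop⟩ := mk_partition CP hdyP hcovP hminP
  obtain ⟨Q, hQpart, hQcard, hQprop⟩ := mk_partition CQ hdyQ hcovQ hminQ
  have hPN : P.card ≤ N := hPcard.trans (hcard ▸ Finset.card_image_le)
  have hQN : Q.card ≤ N := hQcard.trans (hcard ▸ Finset.card_image_le)
  refine ⟨P, Q, hPpart, hQpart, hPN, hQN, by rw [sq]; exact Nat.mul_le_mul hPN hQN, ?_⟩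
  intro I hI J hJ
  obtain ⟨hICP, hImin⟩ := hPprop I hI
  obtain ⟨hJCQ, hJmin⟩ := hQprop J hJ
  have hIdy := hdyP I hICP
  have hJdy := hdyQ J hJCQ
  obtain ⟨kI, iI, hiI1, hiI2, hIeq⟩ := hIdy
  obtain ⟨kJ, iJ, hiJ1, hiJ2, hJeq⟩ := hJdy
  obtain ⟨x, hxirr, hx1, hx2⟩ := exists_irrational_btwn (dIcc_lt' kI iI)
  obtain ⟨y, hyirr, hy1, hy2⟩ := exists_irrational_btwn (dIcc_lt' kJ iJ)
  have hxI : x ∈ I := by rw [hIeq]; exact ⟨hx1.le, hx2.le⟩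
  have hyJ : y ∈ J := by rw [hJeq]; exact ⟨hy1.le, hy2.le⟩
  have hx01 : x ∈ Icc (0:ℝ) 1 := dIcc_subset_unit hiI1 hiI2 (hIeq ▸ hxI)
  have hy01 : y ∈ Icc (0:ℝ) 1 := dIcc_subset_unit hiJ1 hiJ2 (hJeq ▸ hyJ)
  obtain ⟨R, hR, hpR⟩ := hsq (x,y) hx01 hy01
  obtain ⟨hI0dy, hJ0dy, hReq⟩ := hproj R hR
  have hxI0 : x ∈ g1 R := ⟨(x,y), hpR, rfl⟩
  have hyJ0 : y ∈ g2 R := ⟨(x,y), hpR, rfl⟩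
  have hIsub : I ⊆ g1 R :=
    subset_of_not_ssubset ⟨kI, iI, hiI1, hiI2, hIeq⟩ hI0dy hxirr hxI hxI0
      (hImin _ (Finset.mem_image_of_mem _ hR))
  have hJsub : J ⊆ g2 R :=
    subset_of_not_ssubset ⟨kJ, iJ, hiJ1, hiJ2, hJeq⟩ hJ0dy hyirr hyJ hyJ0
      (hJmin _ (Finset.mem_image_of_mem _ hR))
  have hsubR : I ×ˢ J ⊆ R := by rw [hReq]; exact Set.prod_mono hIsub hJsub
  obtain ⟨⟨a, b, c, d, hfab⟩, hfR⟩ := haff R hR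
  refine ⟨⟨a, b, c, d, fun p hp => hfab p (hsubR hp)⟩, ?_⟩
  have himIJ : f '' (I ×ˢ J) =
      ((fun x => (2:ℝ)^a * x + c) '' I) ×ˢ ((fun y => (2:ℝ)^b * y + d) '' J) := by
    rw [Set.prod_image_image_eq]
    exact Set.image_congr (fun p hp => hfab p (hsubR hp))
  have himR : f '' R =
      ((fun x => (2:ℝ)^a * x + c) '' (g1 R)) ×ˢ ((fun y => (2:ℝ)^b * y + d) '' (g2 R)) := by
    rw [Set.prod_image_image_eq]
    have : f '' R = f '' (g1 R ×ˢ g2 R) := by rw [← hReq]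
    rw [this]
    exact Set.image_congr (fun p hp => hfab p (by rw [hReq]; exact hp))
  obtain ⟨I', J', hI'dy, hJ'dy, hfReq⟩ := hfR
  have hprods := himR.symm.trans hfReq
  have heq : ((fun x => (2:ℝ)^a * x + c) '' (g1 R)) = I' ∧
      ((fun y => (2:ℝ)^b * y + d) '' (g2 R)) = J' := by
    rcases Set.prod_eq_prod_iff.mp hprods with ⟨h1, h2⟩ | ⟨h1, -⟩
    · exact ⟨h1, h2⟩
    · exfalso
      rcases h1 with h1 | h1
      · exact absurd h1 (Set.Nonempty.ne_empty ((dyadic_nonempty hI0dy).image _))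
      · exact absurd h1 (Set.Nonempty.ne_empty ((dyadic_nonempty hJ0dy).image _))
  obtain ⟨eI, eJ⟩ := heq
  obtain ⟨lI, jI, hjI1, hjI2, hI0eq⟩ := hI0dy
  obtain ⟨lJ, jJ, hjJ1, hjJ2, hJ0eq⟩ := hJ0dy
  obtain ⟨lI', jI', hjI'1, hjI'2, hI'eq⟩ := hI'dy
  obtain ⟨lJ', jJ', hjJ'1, hjJ'2, hJ'eq⟩ := hJ'dy
  have hsub1 : dIcc kI iI ⊆ dIcc lI jI := by rw [← hIeq, ← hI0eq]; exact hIsub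
  have himg1 : (fun x => (2:ℝ)^a * x + c) '' dIcc lI jI = dIcc lI' jI' := by
    rw [← hI0eq, ← hI'eq]; exact eI
  have hsub2 : dIcc kJ iJ ⊆ dIcc lJ jJ := by rw [← hJeq, ← hJ0eq]; exact hJsub
  have himg2 : (fun y => (2:ℝ)^b * y + d) '' dIcc lJ jJ = dIcc lJ' jJ' := by
    rw [← hJ0eq, ← hJ'eq]; exact eJ
  have hdy1 : IsDyadicInterval ((fun x => (2:ℝ)^a * x + c) '' I) := by
    rw [hIeq]
    exact image_dyadic_sub a c hjI'1 hjI'2 hsub1 himg1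
  have hdy2 : IsDyadicInterval ((fun y => (2:ℝ)^b * y + d) '' J) := by
    rw [hJeq]
    exact image_dyadic_sub b d hjJ'1 hjJ'2 hsub2 himg2
  exact ⟨_, _, hdy1, hdy2, himIJ⟩
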